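/- arXiv:2605.18558 — 4 statements merged into one kernel-verified Lean document; each statement's English description precedes it below -/
import Mathlib

section
/- Let V, E, F be natural numbers and let p : ℕ → ℕ be a finitely supported function with p k = 0 for all k < 3. Assume V + F = E + 2, F = ∑_k p k, 2E = ∑_k k·(p k), and 2E = 4V. Then p 3 ≥ 8, i.e. there are at least eight triangular faces. -/
/-- Every ideal right-angled hyperbolic polyhedron has at least eight
triangular faces: consequence of Euler's formula and the incidence counts
for a planar 4-valent polyhedral graph. -/
theorem ideal_at_least_eight_triangles (V E F : ℕ) (p : ℕ →₀ ℕ)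
    (hp : ∀ k, k < 3 → p k = 0)
    (euler : V + F = E + 2)
    (hF : F = ∑ k ∈ p.support, p k)
    (hE : 2 * E = ∑ k ∈ p.support, k * p k)
    (hval : 2 * E = 4 * V) :
    8 ≤ p 3 := by
  have h4F : 4 * F = 2 * E + 8 := by omega
  have hle : 4 * F ≤ (∑ k ∈ p.support, k * p k) + p 3 := by
    rw [hF, Finset.mul_sum]
    calc ∑ k ∈ p.support, 4 * p k
        ≤ ∑ k ∈ p.support, (k * p k + if k = 3 then p k else 0) := by
          apply Finset.sum_le_sum
          intro k hk
          have hk3 : 3 ≤ k := by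
            by_contra h
            exact (Finsupp.mem_support_iff.mp hk) (hp k (by omega))
          by_cases h : k = 3
          · subst h; simp; omega
          · simp [h]; have : 4 ≤ k := by omega
            nlinarith
      _ = (∑ k ∈ p.support, k * p k) + ∑ k ∈ p.support, (if k = 3 then p k else 0) := by
          rw [Finset.sum_add_distrib]
      _ ≤ (∑ k ∈ p.support, k * p k) + p 3 := by
          gcongr
          rw [Finset.sum_ite_eq' p.support 3 p]
          split <;> simp
  omega
end

section
/- Let Λ be the Lobachevsky function. Then the sequence n ↦ 2n·(Λ(π/4 + π/(2n)) + Λ(π/4 − π/(2n)))/(2n − 1) converges to 2Λ(π/4) = v_oct/4 as n → ∞; that is, the modified normalized volume ω̃(A(n)) = vol(A(n))/(ver(A(n)) − 3) of the ideal right-angled n-antiprism tends to v_oct/4. -/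
open Real Filter

noncomputable def lobachevsky (θ : ℝ) : ℝ :=
  -∫ t in (0:ℝ)..θ, Real.log |2 * Real.sin t|

open Topology MeasureTheory

/-! `log |2 sin t|` has only logarithmic singularities, so it is locally integrable and `Λ` is
continuous. Hence both Lobachevsky terms tend to `Λ(π/4)`, while the prefactor `2n/(2n − 1)`
tends to `1`. -/

lemma intervalIntegrable_log_abs_two_mul_sin (a b : ℝ) :
    IntervalIntegrable (fun t => log |2 * sin t|) volume a b :=
  (analyticOnNhd_const.mul analyticOnNhd_sin).meromorphicOn.intervalIntegrable_log_norm

lemma continuous_lobachevsky : Continuous lobachevsky :=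
  (intervalIntegral.continuous_primitive intervalIntegrable_log_abs_two_mul_sin 0).neg

lemma tendsto_two_mul_natCast_div_two_mul_natCast_sub_one :
    Tendsto (fun n : ℕ => 2 * (n : ℝ) / (2 * (n : ℝ) - 1)) atTop (𝓝 1) :=
  (tendsto_natCast_div_add_atTop (-1 / 2 : ℝ)).congr fun n => by
    rw [← mul_div_mul_left _ _ (two_ne_zero' ℝ)]
    ring_nf

/-- The modified normalized volume `ω̃(A(n)) = vol(A(n))/(2n − 1)` of the ideal
right-angled `n`-antiprism tends to `2Λ(π/4) = v_oct/4` as `n → ∞`. -/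
theorem antiprism_modified_normalized_volume_tendsto :
    Tendsto (fun n : ℕ =>
        (2 * (n : ℝ) * (lobachevsky (π / 4 + π / (2 * (n : ℝ)))
          + lobachevsky (π / 4 - π / (2 * (n : ℝ))))) / (2 * (n : ℝ) - 1))
      atTop (nhds (2 * lobachevsky (π / 4))) := by
  have hshift : Tendsto (fun n : ℕ => π / (2 * (n : ℝ))) atTop (𝓝 0) := by
    simpa only [div_div] using tendsto_const_div_atTop_nhds_zero_nat (π / 2)
  have hplus : Tendsto (fun n : ℕ => lobachevsky (π / 4 + π / (2 * (n : ℝ)))) atTop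
      (𝓝 (lobachevsky (π / 4))) :=
    (continuous_lobachevsky.tendsto _).comp (by simpa using hshift.const_add (π / 4))
  have hminus : Tendsto (fun n : ℕ => lobachevsky (π / 4 - π / (2 * (n : ℝ)))) atTop
      (𝓝 (lobachevsky (π / 4))) :=
    (continuous_lobachevsky.tendsto _).comp (by simpa using hshift.const_sub (π / 4))
  have hlim := tendsto_two_mul_natCast_div_two_mul_natCast_sub_one.mul (hplus.add hminus)
  rw [one_mul, ← two_mul] at hlim
  exact hlim.congr fun n => by ring
end

section
/- Let a, b, A, B be real numbers with a > 0, b > 0 and A ≤ B. Then every point of the closed interval [A, B] lies in the closure of the set { (k·a·A + m·b·B)/(k·a + m·b) : k, m ∈ ℕ, k + m > 0 }. -/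
/-!
Put `t = m b / (k a + m b)`; the weighted mean is then the point `(1 - t) A + t B` of the
segment `[A, B]`, so it suffices that these weight fractions `t` are dense in `[0, 1]`. For
`m > 0` we have `t = b / ((k / m) a + b)`, a continuous function of `u = k / m ≥ 0` mapping
`[0, ∞)` onto `(0, 1]`, and the ratios `k / m` are dense in `[0, ∞)`
(already `⌊c n⌋ / n → c`).
-/

open Set Filter Topology AffineMap

lemma mem_closure_natCast_div_natCast {c : ℝ} (hc : 0 ≤ c) :
    c ∈ closure {u : ℝ | ∃ k m : ℕ, 0 < m ∧ u = k / m} := by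
  have hlim : Tendsto (fun n : ℕ => (⌊c * n⌋₊ : ℝ) / n) atTop (𝓝 c) :=
    (tendsto_nat_floor_mul_div_atTop hc).comp tendsto_natCast_atTop_atTop
  refine mem_closure_of_tendsto hlim ?_
  filter_upwards [eventually_gt_atTop 0] with n hn
  exact ⟨⌊c * n⌋₊, n, hn, rfl⟩

lemma Ioc_subset_image_div_mul_add {a b : ℝ} (ha : 0 < a) (hb : 0 < b) :
    Ioc 0 1 ⊆ (fun u => b / (u * a + b)) '' Ici 0 := by
  rintro t ⟨ht₀, ht₁⟩
  refine ⟨b * (1 - t) / (t * a), by simp only [mem_Ici]; positivity, ?_⟩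
  field_simp
  ring

/-- The fractions `m b / (k a + m b)`: the weight of the second term in the weighted mean. -/
def weightFractions (a b : ℝ) : Set ℝ :=
  {t | ∃ k m : ℕ, 0 < k + m ∧ t = m * b / (k * a + m * b)}

lemma Icc_subset_closure_weightFractions {a b : ℝ} (ha : 0 < a) (hb : 0 < b) :
    Icc 0 1 ⊆ closure (weightFractions a b) := by
  set ψ : ℝ → ℝ := fun u => b / (u * a + b)
  set ratios := {u : ℝ | ∃ k m : ℕ, 0 < m ∧ u = k / m}
  have hratios : ψ '' ratios ⊆ weightFractions a b := by
    rintro _ ⟨_, ⟨k, m, hm, rfl⟩, rfl⟩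
    have hm' : (0 : ℝ) < m := by exact_mod_cast hm
    refine ⟨k, m, by omega, ?_⟩
    simp only [ψ]
    field_simp
  have hclosure : closure ratios = Ici 0 :=
    (closure_minimal (by rintro _ ⟨k, m, -, rfl⟩; simp only [mem_Ici]; positivity)
      isClosed_Ici).antisymm fun c hc => mem_closure_natCast_div_natCast hc
  have hψ : ContinuousOn ψ (closure ratios) := hclosure ▸ fun u hu =>
    (continuousAt_const.div (by fun_prop) (by nlinarith [mem_Ici.mp hu])).continuousWithinAt
  calc Icc 0 1 = closure (Ioc 0 1) := (closure_Ioc zero_ne_one).symm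
    _ ⊆ closure (ψ '' closure ratios) :=
        closure_mono (hclosure ▸ Ioc_subset_image_div_mul_add ha hb)
    _ ⊆ closure (closure (ψ '' ratios)) := closure_mono hψ.image_closure
    _ ⊆ closure (weightFractions a b) := by rw [closure_closure]; exact closure_mono hratios

lemma div_add_eq_lineMap {p q : ℝ} (A B : ℝ) (h : p + q ≠ 0) :
    (p * A + q * B) / (p + q) = lineMap A B (q / (p + q)) := by
  rw [lineMap_apply_ring]
  field_simp
  ring

/-- Weighted means `(k·a·A + m·b·B)/(k·a + m·b)` over `k, m ∈ ℕ` with `k + m > 0`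
are dense in `[A, B]` whenever `a, b > 0` and `A ≤ B`. -/
theorem weighted_means_dense (a b A B : ℝ) (ha : 0 < a) (hb : 0 < b) (hAB : A ≤ B) :
    ∀ x ∈ Set.Icc A B,
      x ∈ closure {y : ℝ | ∃ k m : ℕ, 0 < k + m ∧
        y = ((k : ℝ) * a * A + (m : ℝ) * b * B) / ((k : ℝ) * a + (m : ℝ) * b)} := by
  intro x hx
  rw [← segment_eq_Icc hAB, segment_eq_image_lineMap] at hx
  obtain ⟨t, ht, rfl⟩ := hx
  have hmeans : lineMap A B '' weightFractions a b ⊆ {y : ℝ | ∃ k m : ℕ, 0 < k + m ∧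
      y = ((k : ℝ) * a * A + (m : ℝ) * b * B) / ((k : ℝ) * a + (m : ℝ) * b)} := by
    rintro _ ⟨_, ⟨k, m, hkm, rfl⟩, rfl⟩
    have hkm' : (0 : ℝ) < k + m := by exact_mod_cast hkm
    have hpos : 0 < (k : ℝ) * a + m * b := by
      nlinarith [min_le_left a b, min_le_right a b, lt_min ha hb, k.cast_nonneg (α := ℝ),
        m.cast_nonneg (α := ℝ)]
    exact ⟨k, m, hkm, (div_add_eq_lineMap A B hpos.ne').symm⟩
  exact closure_mono hmeans <| image_closure_subset_closure_image lineMap_continuous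
    ⟨t, Icc_subset_closure_weightFractions ha hb ht, rfl⟩
end

section
/- Let a, b, c, A, B be real numbers with a > 0, b > 0, c > 0 and A ≤ B. Then every point of the closed interval [A, B] lies in the closure of the set { (k·a·A + m·b·B)/(k·a + m·b + c) : k, m ∈ ℕ, k + m > 0 }. -/
/-!
Write `x = s A + t B` with `s, t ≥ 0`, `s + t = 1`, and take `k = ⌊s b N⌋`, `m = ⌊t a N⌋`.
Dividing numerator and denominator by `N`, the weights `k a / N`, `m b / N` tend to
`s a b`, `t a b` while the offset `c / N` tends to `0`, so the means tend to `s A + t B = x`.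
-/

open Filter Topology

theorem Filter.Tendsto.weighted_mean_offset {α : Type*} {l : Filter α} {u v w : α → ℝ}
    {p q : ℝ} (hu : Tendsto u l (𝓝 p)) (hv : Tendsto v l (𝓝 q)) (hw : Tendsto w l (𝓝 0))
    (hpq : p + q ≠ 0) (A B : ℝ) :
    Tendsto (fun i ↦ (u i * A + v i * B) / (u i + v i + w i)) l
      (𝓝 ((p * A + q * B) / (p + q))) := by
  have hden : Tendsto (fun i ↦ u i + v i + w i) l (𝓝 (p + q)) := by
    simpa using (hu.add hv).add hw
  exact ((hu.mul_const A).add (hv.mul_const B)).div hden hpq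

theorem tendsto_nat_floor_mul_mul_div_atTop {r : ℝ} (hr : 0 ≤ r) (a : ℝ) :
    Tendsto (fun N : ℝ ↦ (⌊r * N⌋₊ : ℝ) * a / N) atTop (𝓝 (r * a)) := by
  simpa only [mul_div_right_comm] using (tendsto_nat_floor_mul_div_atTop hr).mul_const a

theorem weighted_means_offset_dense_general (a b c A B : ℝ)
    (ha : 0 < a) (hb : 0 < b) (hAB : A ≤ B) :
    ∀ x ∈ Set.Icc A B,
      x ∈ closure {y : ℝ | ∃ k m : ℕ, 0 < k + m ∧
        y = ((k : ℝ) * a * A + (m : ℝ) * b * B) / ((k : ℝ) * a + (m : ℝ) * b + c)} := by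
  intro x hx
  rw [← segment_eq_Icc hAB] at hx
  obtain ⟨s, t, hs, ht, hst, rfl⟩ := hx
  set k : ℝ → ℕ := fun N ↦ ⌊s * b * N⌋₊
  set m : ℝ → ℕ := fun N ↦ ⌊t * a * N⌋₊
  have hk : Tendsto (fun N ↦ (k N : ℝ) * a / N) atTop (𝓝 (s * b * a)) :=
    tendsto_nat_floor_mul_mul_div_atTop (mul_nonneg hs hb.le) a
  have hm : Tendsto (fun N ↦ (m N : ℝ) * b / N) atTop (𝓝 (t * a * b)) :=
    tendsto_nat_floor_mul_mul_div_atTop (mul_nonneg ht ha.le) b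
  have hab : s * b * a + t * a * b = a * b := by linear_combination a * b * hst
  have hpos : ∀ᶠ N in atTop, 0 < k N + m N := by
    filter_upwards [(hk.add hm).eventually_const_lt (hab ▸ mul_pos ha hb)] with N hN
    by_contra! h0
    obtain ⟨hk0, hm0⟩ : k N = 0 ∧ m N = 0 := by omega
    simp [hk0, hm0] at hN
  have hlim := hk.weighted_mean_offset hm ((tendsto_const_nhds (x := c)).div_atTop tendsto_id)
    (hab ▸ (mul_pos ha hb).ne') A B
  refine mem_closure_of_tendsto (f := fun N ↦ ((k N : ℝ) * a * A + (m N : ℝ) * b * B) /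
      ((k N : ℝ) * a + (m N : ℝ) * b + c)) ?_ (hpos.mono fun N hN ↦ ⟨k N, m N, hN, rfl⟩)
  have hlim_eq : (s * b * a * A + t * a * b * B) / (s * b * a + t * a * b) = s • A + t • B := by
    rw [hab, smul_eq_mul, smul_eq_mul]
    field_simp
  refine hlim_eq ▸ hlim.congr' ((eventually_gt_atTop 0).mono fun N hN ↦ ?_)
  simp only [id]
  field_simp

/-- Weighted means with a fixed offset `c > 0` in the denominator,
`(k·a·A + m·b·B)/(k·a + m·b + c)` over `k, m ∈ ℕ` with `k + m > 0`,
are still dense in `[A, B]` whenever `a, b, c > 0` and `A ≤ B`. -/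
theorem weighted_means_offset_dense (a b c A B : ℝ)
    (ha : 0 < a) (hb : 0 < b) (hc : 0 < c) (hAB : A ≤ B) :
    ∀ x ∈ Set.Icc A B,
      x ∈ closure {y : ℝ | ∃ k m : ℕ, 0 < k + m ∧
        y = ((k : ℝ) * a * A + (m : ℝ) * b * B) / ((k : ℝ) * a + (m : ℝ) * b + c)} :=
  weighted_means_offset_dense_general a b c A B ha hb hAB
end
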